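/- arXiv:1807.04023 — 2 statements merged into one kernel-verified Lean document; each statement's English description precedes it below -/
import Mathlib

section
/- Let q be a P-primary element of an le-module M and n ∈ M with n ≰ q. Then (q:n) = { r ∈ R : rn ≤ q } is a P-primary ideal of R. -/
/-!
Since `q` is a submodule element and the action is monotone, `(q : n)` is an ideal, proper
because `1 • n = n ≰ q`. If `(x * y) • n ≤ q`, primality of `q` applied to `y • (x • n) ≤ q` gives
`x • n ≤ q` or a power of `y` in `(q : e)`, and `Rad (q : e) ⊆ Rad (q : n)` by monotonicity; so
`(q : n)` is primary. The same primality applied to `aᵐ • n ≤ q` with `n ≰ q` gives the reverse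
inclusion `Rad (q : n) ⊆ Rad (q : e) = P`.
-/

/-- An le-module over a commutative ring `R`: a commutative monoid and complete
lattice with top element `e = ⊤`, addition distributing over arbitrary joins,
with an `R`-action satisfying the le-module axioms. -/
class LeModule (R : Type*) (M : Type*) [CommRing R] extends
    AddCommMonoid M, CompleteLattice M, SMul R M where
  add_sSup : ∀ (m : M) (S : Set M), m + sSup S = ⨆ x ∈ S, m + x
  smul_add' : ∀ (r : R) (m₁ m₂ : M), r • (m₁ + m₂) = r • m₁ + r • m₂
  add_smul_le : ∀ (r₁ r₂ : R) (m : M), (r₁ + r₂) • m ≤ r₁ • m + r₂ • m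
  mul_smul' : ∀ (r₁ r₂ : R) (m : M), (r₁ * r₂) • m = r₁ • (r₂ • m)
  one_smul' : ∀ m : M, (1 : R) • m = m
  zero_smul' : ∀ m : M, (0 : R) • m = (0 : M)
  smul_zero' : ∀ r : R, r • (0 : M) = (0 : M)
  smul_sSup : ∀ (r : R) (S : Set M), r • sSup S = ⨆ x ∈ S, r • x

namespace LeModule

variable (R : Type*) {M : Type*} [CommRing R] [LeModule R M]

/-- `n` is a submodule element: `n + n ≤ n` and `r • n ≤ n` for all `r ∈ R`. -/
def IsSub (n : M) : Prop := n + n ≤ n ∧ ∀ r : R, r • n ≤ n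

variable {R}

/-- `A n = ⋁ { a₁•n + ⋯ + aₖ•n : aᵢ ∈ A }`. -/
def idealSMul (A : Ideal R) (n : M) : M :=
  sSup { m : M | ∃ l : List R, (∀ a ∈ l, a ∈ A) ∧ m = (l.map (fun a => a • n)).sum }

/-- `(n : A) = ⋁ { x ∈ M : A x ≤ n }`. -/
def colonIdeal (n : M) (A : Ideal R) : M := sSup { x : M | idealSMul A x ≤ n }

/-- `(n : r) = ⋁ { x ∈ M : r • x ≤ n }`. -/
def colonElem (n : M) (r : R) : M := sSup { x : M | r • x ≤ n }

variable (R)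

/-- `(k : m) = { r ∈ R : r • m ≤ k }` as a set of ring elements. -/
def colonSet (k m : M) : Set R := { r : R | r • m ≤ k }

/-- `Rad(n) = { a ∈ R : aᵐ • e ≤ n for some positive m }`. -/
def radSet (n : M) : Set R := { a : R | ∃ m : ℕ, 0 < m ∧ a ^ m • (⊤ : M) ≤ n }

/-- A primary element of an le-module. -/
def IsPrimaryElem (q : M) : Prop :=
  IsSub R q ∧ q ≠ ⊤ ∧
    ∀ (a : R) (x : M), a • x ≤ q → x ≤ q ∨ ∃ m : ℕ, 0 < m ∧ a ^ m • (⊤ : M) ≤ q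

/-- A prime submodule element of an le-module. -/
def IsPrimeElem (p : M) : Prop :=
  IsSub R p ∧ p ≠ ⊤ ∧
    ∀ (r : R) (n : M), r • n ≤ p → r • (⊤ : M) ≤ p ∨ n ≤ p

end LeModule

namespace LeModule

variable {R M : Type*} [CommRing R] [LeModule R M]

theorem smul_mono (r : R) {x y : M} (h : x ≤ y) : r • x ≤ r • y := by
  rw [← sup_eq_right.mpr h, ← sSup_pair, smul_sSup]
  exact le_biSup (fun z => r • z) (Set.mem_insert x {y})

theorem add_le_add_left' (m : M) {x y : M} (h : x ≤ y) : m + x ≤ m + y := by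
  rw [← sup_eq_right.mpr h, ← sSup_pair, add_sSup (R := R)]
  exact le_biSup (fun z => m + z) (Set.mem_insert x {y})

namespace IsSub

variable {q : M} (hq : IsSub R q)
include hq

theorem zero_le : (0 : M) ≤ q := by
  simpa only [zero_smul'] using hq.2 0

theorem add_le {x y : M} (hx : x ≤ q) (hy : y ≤ q) : x + y ≤ q :=
  calc x + y ≤ x + q := add_le_add_left' (R := R) x hy
    _ = q + x := add_comm x q
    _ ≤ q + q := add_le_add_left' (R := R) q hx
    _ ≤ q := hq.1

def colon (n : M) : Ideal R where
  carrier := colonSet R q n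
  add_mem' {a b} ha hb := (add_smul_le a b n).trans (hq.add_le ha hb)
  zero_mem' := by
    show (0 : R) • n ≤ q
    rw [zero_smul']
    exact hq.zero_le
  smul_mem' c a ha := by
    show (c * a) • n ≤ q
    rw [mul_smul']
    exact (smul_mono c ha).trans (hq.2 c)

theorem mem_colon {n : M} {r : R} : r ∈ hq.colon n ↔ r • n ≤ q := Iff.rfl

theorem coe_colon (n : M) : (hq.colon n : Set R) = colonSet R q n := rfl

theorem colon_ne_top {n : M} (hn : ¬ n ≤ q) : hq.colon n ≠ ⊤ := by
  intro h
  have h1 : (1 : R) ∈ hq.colon n := h ▸ Submodule.mem_top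
  rw [mem_colon, one_smul'] at h1
  exact hn h1

theorem mem_radical_colon_of_mem_radSet {n : M} {a : R} (ha : a ∈ radSet R q) :
    a ∈ (hq.colon n).radical := by
  obtain ⟨m, -, hm⟩ := ha
  exact ⟨m, (smul_mono (a ^ m) le_top).trans hm⟩

end IsSub

namespace IsPrimaryElem

variable {q : M} (hq : IsPrimaryElem R q)
include hq

theorem radical_colon {n : M} (hn : ¬ n ≤ q) :
    ((hq.1.colon n).radical : Set R) = radSet R q := by
  ext a
  refine ⟨fun ⟨m, hm⟩ => ?_, hq.1.mem_radical_colon_of_mem_radSet⟩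
  have hm_pos : 0 < m := by
    refine Nat.pos_of_ne_zero fun h0 => hn ?_
    simpa only [h0, pow_zero, IsSub.mem_colon, one_smul'] using hm
  obtain hnq | ⟨k, hk, hak⟩ := hq.2.2 (a ^ m) n hm
  · exact absurd hnq hn
  · exact ⟨m * k, Nat.mul_pos hm_pos hk, by rwa [pow_mul]⟩

theorem colon_isPrimary {n : M} (hn : ¬ n ≤ q) : (hq.1.colon n).IsPrimary := by
  refine Ideal.isPrimary_iff.mpr ⟨hq.1.colon_ne_top hn, fun {x y} hxy => ?_⟩
  rw [IsSub.mem_colon, mul_comm, mul_smul'] at hxy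
  exact (hq.2.2 y (x • n) hxy).imp id hq.1.mem_radical_colon_of_mem_radSet

end IsPrimaryElem

end LeModule

open LeModule
theorem colonSet_isPrimary_general {R M : Type*} [CommRing R] [LeModule R M]
    (P : Ideal R) (q : M)
    (hq : IsPrimaryElem R q) (hrad : radSet R q = (P : Set R))
    (n : M) (hn : ¬ n ≤ q) :
    ∃ I : Ideal R, (I : Set R) = colonSet R q n ∧ I.IsPrimary ∧ I.radical = P :=
  ⟨hq.1.colon n, hq.1.coe_colon n, hq.colon_isPrimary hn,
    SetLike.coe_injective ((hq.radical_colon hn).trans hrad)⟩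

/-- if `q` is `P`-primary and `n ≰ q`, then `(q : n)` is a
`P`-primary ideal of `R`. -/
theorem colonSet_isPrimary {R M : Type*} [CommRing R] [LeModule R M]
    (P : Ideal R) (hP : P.IsPrime) (q : M)
    (hq : IsPrimaryElem R q) (hrad : radSet R q = (P : Set R))
    (n : M) (hn : ¬ n ≤ q) :
    ∃ I : Ideal R, (I : Set R) = colonSet R q n ∧ I.IsPrimary ∧ I.radical = P :=
  colonSet_isPrimary_general P q hq hrad n hn
end

section
/- Let n be a proper submodule element of an le-module M with reduced primary decomposition n = q₁ ∧ ⋯ ∧ q_m, Pᵢ = Rad(qᵢ), and r ∈ R. Then (n:r) = n if and only if r is contained in no Pᵢ, where (n:r) = ⋁{ x ∈ M : rx ≤ n }. -/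
/-! If `r ∈ Pᵢ`, some power `rᵏ` kills `⊤` modulo `qᵢ`, hence kills the meet `y` of the other
components; since `y ≰ qᵢ` by reducedness, there is a `t` with `rᵗ y ≰ qᵢ ≥ rᵗ⁺¹ y`, and
`x = rᵗ y` satisfies `r x ≤ n` but `x ≰ n`. Conversely, if `r` lies in no `Pᵢ`, primarity of each
`qᵢ` turns `r x ≤ qᵢ` into `x ≤ qᵢ`. -/

namespace LeModule

variable {R M : Type*} [CommRing R] [LeModule R M]

theorem smul_mono_right (r : R) {a b : M} (h : a ≤ b) : r • a ≤ r • b := by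
  have hsup : r • (a ⊔ b) = r • a ⊔ r • b := by
    rw [← sSup_pair, smul_sSup, iSup_pair]
  calc r • a ≤ r • a ⊔ r • b := le_sup_left
    _ = r • b := by rw [← hsup, sup_eq_right.mpr h]

theorem pow_succ_smul (r : R) (t : ℕ) (x : M) : r ^ (t + 1) • x = r • r ^ t • x := by
  rw [pow_succ', mul_smul']

theorem smul_iInf_le_iInf {ι : Sort*} {q : ι → M} (hq : ∀ i (s : R), s • q i ≤ q i) (s : R) :
    s • ⨅ i, q i ≤ ⨅ i, q i :=
  le_iInf fun i => (smul_mono_right s (iInf_le q i)).trans (hq i s)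

theorem colonElem_le_iff {n k : M} {r : R} : colonElem n r ≤ k ↔ ∀ x, r • x ≤ n → x ≤ k :=
  sSup_le_iff

theorem colonElem_eq_self_iff {n : M} {r : R} (hn : r • n ≤ n) :
    colonElem n r = n ↔ ∀ x, r • x ≤ n → x ≤ n := by
  rw [← colonElem_le_iff]
  exact ⟨le_of_eq, fun h => le_antisymm h (le_sSup hn)⟩

theorem exists_pow_smul_not_le_of_pow_smul_le {r : R} {y q : M} {k : ℕ}
    (hk : r ^ k • y ≤ q) (hy : ¬ y ≤ q) : ∃ t : ℕ, ¬ r ^ t • y ≤ q ∧ r • r ^ t • y ≤ q := by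
  induction k with
  | zero => rw [pow_zero, one_smul'] at hk; exact absurd hk hy
  | succ k ih =>
    by_cases hle : r ^ k • y ≤ q
    · exact ih hle
    · exact ⟨k, hle, pow_succ_smul r k y ▸ hk⟩

theorem IsPrimaryElem.le_of_smul_le {q x : M} {r : R} (hq : IsPrimaryElem R q)
    (hr : r ∉ radSet R q) (h : r • x ≤ q) : x ≤ q :=
  (hq.2.2 r x h).resolve_right hr

theorem exists_smul_le_iInf_not_le {ι : Type*} {q : ι → M} (hq : ∀ j (s : R), s • q j ≤ q j)
    {i : ι} (hred : ¬ (⨅ j, ⨅ _ : j ≠ i, q j) ≤ q i) {r : R} (hr : r ∈ radSet R (q i)) :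
    ∃ x, r • x ≤ ⨅ j, q j ∧ ¬ x ≤ q i := by
  set y := ⨅ j, ⨅ _ : j ≠ i, q j
  have hy : ∀ s : R, s • y ≤ y :=
    smul_iInf_le_iInf fun j => smul_iInf_le_iInf fun _ => hq j
  obtain ⟨k, -, hk⟩ := hr
  obtain ⟨t, ht, ht1⟩ := exists_pow_smul_not_le_of_pow_smul_le
    ((smul_mono_right _ le_top).trans hk) hred
  refine ⟨r ^ t • y, le_iInf fun j => ?_, ht⟩
  by_cases hji : j = i
  · exact hji ▸ ht1
  · calc r • r ^ t • y ≤ y := (smul_mono_right r (hy _)).trans (hy r)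
      _ ≤ q j := (iInf_le _ j).trans (iInf_le _ hji)

end LeModule

open LeModule

theorem colonElem_eq_iff_not_mem_assoc_primes_general {R M : Type*} [CommRing R] [LeModule R M]
    (m : ℕ) (q : Fin m → M) (P : Fin m → Ideal R)
    (hq : ∀ i, IsPrimaryElem R (q i) ∧ radSet R (q i) = ((P i : Ideal R) : Set R))
    (n : M) (hn : n = ⨅ i, q i)
    (hred1 : ∀ i : Fin m, ¬ (⨅ j : Fin m, ⨅ _ : j ≠ i, q j) ≤ q i)
    (r : R) :
    colonElem n r = n ↔ ∀ i, r ∉ P i := by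
  subst hn
  have hstable : ∀ i (s : R), s • q i ≤ q i := fun i => (hq i).1.1.2
  have hrad : ∀ i, r ∈ radSet R (q i) ↔ r ∈ P i := fun i => by rw [(hq i).2]; rfl
  rw [colonElem_eq_self_iff (smul_iInf_le_iInf hstable r)]
  constructor
  · intro hcolon i hri
    obtain ⟨x, hrx, hx⟩ := exists_smul_le_iInf_not_le hstable (hred1 i) ((hrad i).mpr hri)
    exact hx ((hcolon x hrx).trans (iInf_le q i))
  · intro hr x hrx
    exact le_iInf fun i =>
      (hq i).1.le_of_smul_le (mt (hrad i).mp (hr i)) (hrx.trans (iInf_le q i))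

/-- for a reduced primary decomposition `n = q₁ ∧ ⋯ ∧ q_m`,
`(n : r) = n` iff `r` lies in no associated prime `Pᵢ`. -/
theorem colonElem_eq_iff_not_mem_assoc_primes {R M : Type*} [CommRing R] [LeModule R M]
    (m : ℕ) (hm : 0 < m) (q : Fin m → M) (P : Fin m → Ideal R)
    (hq : ∀ i, IsPrimaryElem R (q i) ∧ radSet R (q i) = ((P i : Ideal R) : Set R))
    (n : M) (hn : n = ⨅ i, q i) (hproper : n ≠ ⊤)
    (hred1 : ∀ i : Fin m, ¬ (⨅ j : Fin m, ⨅ _ : j ≠ i, q j) ≤ q i)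
    (hred2 : ∀ i j : Fin m, i ≠ j → P i ≠ P j)
    (r : R) :
    colonElem n r = n ↔ ∀ i, r ∉ P i :=
  colonElem_eq_iff_not_mem_assoc_primes_general m q P hq n hn hred1 r
end
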